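/- For any matrices U, U* ∈ ℝ^{d₁×r} and V, V* ∈ ℝ^{d₂×r}, letting W ∈ ℝ^{(d₁+d₂)×r} be the vertical stacking of U on top of V and W* the vertical stacking of U* on top of V*, and setting M = UVᵀ, M* = U*V*ᵀ, the following identity holds: ‖WWᵀ − W*W*ᵀ‖_F² = 4‖M − M*‖_F² − 2‖UᵀU* − VᵀV*‖_F² + ‖UᵀU − VᵀV‖_F² + ‖U*ᵀU* − V*ᵀV*‖_F². -/

import Mathlib

open Matrix

/-- Frobenius norm of a real matrix. -/
noncomputable def frob {m n : Type*} [Fintype m] [Fintype n] (A : Matrix m n ℝ) : ℝ :=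
  Real.sqrt (∑ i, ∑ j, A i j ^ 2)

/-!
Write `⟨A, B⟩ = tr (Aᵀ B)` for the Frobenius inner product. Cycling the trace gives
`⟨A Aᵀ, B Bᵀ⟩ = ‖Aᵀ B‖²`, so `‖W Wᵀ - W* W*ᵀ‖² = ‖Wᵀ W‖² - 2 ‖Wᵀ W*‖² + ‖W*ᵀ W*‖²`, and the
products of the stacked matrices split as `Wᵀ W* = Uᵀ U* + Vᵀ V*`. Polarization
`‖A + B‖² = ‖A - B‖² + 4 ⟨A, B⟩` turns each of these three squares into a difference term of
the right-hand side plus a cross term, and cycling the trace once more identifies the cross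
terms: `⟨Uᵀ U*, Vᵀ V*⟩ = ⟨U Vᵀ, U* V*ᵀ⟩`, which recombine into `4 ‖M - M*‖²`.
-/

section

variable {m n p : Type*} [Fintype m] [Fintype n] [Fintype p]

theorem frob_sq (A : Matrix m n ℝ) : frob A ^ 2 = trace (Aᵀ * A) := by
  rw [frob, Real.sq_sqrt (by positivity), Finset.sum_comm]
  simp only [trace, diag, mul_apply, transpose_apply, sq]

theorem trace_transpose_mul_comm (A B : Matrix m n ℝ) : trace (Bᵀ * A) = trace (Aᵀ * B) := by
  rw [← trace_transpose, transpose_mul, transpose_transpose]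

theorem frob_sub_sq (A B : Matrix m n ℝ) :
    frob (A - B) ^ 2 = frob A ^ 2 - 2 * trace (Aᵀ * B) + frob B ^ 2 := by
  simp only [frob_sq, transpose_sub, Matrix.sub_mul, Matrix.mul_sub, trace_sub,
    trace_transpose_mul_comm A B]
  ring

theorem frob_add_sq_eq_frob_sub_sq_add (A B : Matrix m n ℝ) :
    frob (A + B) ^ 2 = frob (A - B) ^ 2 + 4 * trace (Aᵀ * B) := by
  simp only [frob_sq, transpose_add, transpose_sub, Matrix.add_mul, Matrix.sub_mul,
    Matrix.mul_add, Matrix.mul_sub, trace_add, trace_sub, trace_transpose_mul_comm A B]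
  ring

theorem trace_transpose_mul_gram (A B : Matrix m n ℝ) :
    trace ((A * Aᵀ)ᵀ * (B * Bᵀ)) = frob (Aᵀ * B) ^ 2 := by
  rw [frob_sq]
  simp only [transpose_mul, transpose_transpose, Matrix.mul_assoc]
  rw [trace_mul_comm Bᵀ]
  simp only [Matrix.mul_assoc]

theorem frob_gram_sub_gram_sq (A B : Matrix m n ℝ) :
    frob (A * Aᵀ - B * Bᵀ) ^ 2
      = frob (Aᵀ * A) ^ 2 - 2 * frob (Aᵀ * B) ^ 2 + frob (Bᵀ * B) ^ 2 := by
  rw [frob_sub_sq, frob_sq (A * Aᵀ), frob_sq (B * Bᵀ), trace_transpose_mul_gram,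
    trace_transpose_mul_gram, trace_transpose_mul_gram]

theorem trace_transpose_mul_eq_trace_outer (A C : Matrix m n ℝ) (B D : Matrix p n ℝ) :
    trace ((Aᵀ * C)ᵀ * (Bᵀ * D)) = trace ((A * Bᵀ)ᵀ * (C * Dᵀ)) := by
  rw [← trace_transpose ((A * Bᵀ)ᵀ * _)]
  simp only [transpose_mul, transpose_transpose, Matrix.mul_assoc]
  rw [trace_mul_comm D]
  simp only [Matrix.mul_assoc]

end

theorem fromRows_transpose_mul_fromRows {m n p : Type*} [Fintype m] [Fintype p]
    (A C : Matrix m n ℝ) (B D : Matrix p n ℝ) :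
    (fromRows A B)ᵀ * fromRows C D = Aᵀ * C + Bᵀ * D := by
  rw [transpose_fromRows, fromCols_mul_fromRows]

/-- For the vertical stackings `W` of `(U,V)` and `W*` of `(U*,V*)`, with `M = UVᵀ`
and `M* = U*V*ᵀ`:
`‖WWᵀ − W*W*ᵀ‖_F² = 4‖M − M*‖_F² − 2‖UᵀU* − VᵀV*‖_F² + ‖UᵀU − VᵀV‖_F² + ‖U*ᵀU* − V*ᵀV*‖_F²`. -/
theorem stacked_gram_difference_identity {d₁ d₂ r : ℕ}
    (U Us : Matrix (Fin d₁) (Fin r) ℝ) (V Vs : Matrix (Fin d₂) (Fin r) ℝ) :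
    frob (fromRows U V * (fromRows U V)ᵀ - fromRows Us Vs * (fromRows Us Vs)ᵀ) ^ 2
      = 4 * frob (U * Vᵀ - Us * Vsᵀ) ^ 2
        - 2 * frob (Uᵀ * Us - Vᵀ * Vs) ^ 2
        + frob (Uᵀ * U - Vᵀ * V) ^ 2
        + frob (Usᵀ * Us - Vsᵀ * Vs) ^ 2 := by
  rw [frob_gram_sub_gram_sq, fromRows_transpose_mul_fromRows, fromRows_transpose_mul_fromRows,
    fromRows_transpose_mul_fromRows, frob_add_sq_eq_frob_sub_sq_add,
    frob_add_sq_eq_frob_sub_sq_add, frob_add_sq_eq_frob_sub_sq_add, frob_sub_sq (U * Vᵀ),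
    frob_sq (U * Vᵀ), frob_sq (Us * Vsᵀ), trace_transpose_mul_eq_trace_outer,
    trace_transpose_mul_eq_trace_outer, trace_transpose_mul_eq_trace_outer]
  ring
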